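/- arXiv:1803.00715 — 3 statements merged into one kernel-verified Lean document; each statement's English description precedes it below -/
import Mathlib

section
/- Let P, Q be Borel probability measures on ℝ^d satisfying the continuity assumption, and let ϑ ∈ (0,1). Then W_d(P,Q) ≥ ∫_{S^{d−1}} | 1/2 − (P ⊗ Q)({(x,y) ∈ ℝ^d × ℝ^d : ⟨β,x⟩ ≤ ⟨β,y⟩}) | dλ(β). -/
/-!
Fix a direction `β` and write `μ`, `ν` for the laws of `⟪β, X⟫` and `⟪β, Y⟫`, `X ∼ P`, `Y ∼ Q`,
with distribution functions `F`, `G`, and `A = (μ ⊗ ν){s ≤ t}`. For atomless `μ`, `ν` one has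
`∫ F dμ = ∫ G dν = 1/2`, `∫ F dν = A` and `∫ G dμ = 1 - A`, so `F - G` has mean `A - 1/2` under
both `μ` and `ν`. Jensen's inequality under each of them, combined along the mixture (whose
weights sum to at least one), gives `(A - 1/2)² ≤ ∫ (F - G)² dH_β`. Taking square roots and
applying Jensen once more, to the concave square root over the sphere, yields the bound.
-/

open MeasureTheory ProbabilityTheory Real
open scoped RealInnerProductSpace ENNReal BigOperators

noncomputable section

/-- The standard Gaussian measure on `ℝ^d = EuclideanSpace ℝ (Fin d)`. -/
def stdGaussian (d : ℕ) : Measure (EuclideanSpace ℝ (Fin d)) :=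
  (Measure.pi fun _ : Fin d => gaussianReal 0 1).map
    ⇑(EuclideanSpace.equiv (Fin d) ℝ).symm

/-- The uniform (rotation-invariant) probability measure `λ` on the unit sphere
`S^{d-1} = {x : ‖x‖ = 1} ⊆ ℝ^d`, realized as a Borel measure on `ℝ^d` concentrated
on the sphere: the pushforward of the standard Gaussian under `x ↦ ‖x‖⁻¹ • x`. -/
def sphereUniform (d : ℕ) : Measure (EuclideanSpace ℝ (Fin d)) :=
  (stdGaussian d).map fun x => ‖x‖⁻¹ • x

/-- `Ang u v = arccos (⟪u,v⟫ / (‖u‖ ‖v‖)) ∈ [0, π]`, the angle between two nonzero vectors. -/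
def Ang {d : ℕ} (u v : EuclideanSpace ℝ (Fin d)) : ℝ :=
  Real.arccos (⟪u, v⟫ / (‖u‖ * ‖v‖))

/-- Law of the projection `x ↦ ⟪β, x⟫` under `P`. -/
def projLaw {d : ℕ} (P : Measure (EuclideanSpace ℝ (Fin d)))
    (β : EuclideanSpace ℝ (Fin d)) : Measure ℝ :=
  P.map fun x => ⟪β, x⟫

/-- `F_{β,P}(t) = P {x : ⟪β,x⟫ ≤ t}`. -/
def projCDF {d : ℕ} (P : Measure (EuclideanSpace ℝ (Fin d)))
    (β : EuclideanSpace ℝ (Fin d)) (t : ℝ) : ℝ :=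
  (P {x | ⟪β, x⟫ ≤ t}).toReal

/-- The squared Cramér–von Mises distance `W_d²(P,Q)` with weight `ϑ`:
`∫_{S^{d-1}} ∫_ℝ (F_{β,P}(t) - F_{β,Q}(t))² dH_β(t) dλ(β)` where `H_β` is the law of
`x ↦ ⟪β,x⟫` under the mixture `ϑ•P + (1-ϑ)•Q`. -/
def cvmSq {d : ℕ} (ϑ : ℝ) (P Q : Measure (EuclideanSpace ℝ (Fin d))) : ℝ :=
  ∫ β, (∫ t, (projCDF P β t - projCDF Q β t) ^ 2
      ∂(projLaw (ENNReal.ofReal ϑ • P + ENNReal.ofReal (1 - ϑ) • Q) β))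
    ∂(sphereUniform d)

/-- The continuity assumption: for `λ`-a.e. `β`, the pushforwards of `P` and `Q`
under `x ↦ ⟪β,x⟫` are atomless. -/
def ContinuityAssumption {d : ℕ} (P Q : Measure (EuclideanSpace ℝ (Fin d))) : Prop :=
  ∀ᵐ β ∂(sphereUniform d),
    (∀ t : ℝ, projLaw P β {t} = 0) ∧ (∀ t : ℝ, projLaw Q β {t} = 0)

open Set

section Jensen

variable {Ω : Type*} [MeasurableSpace Ω] {μ ν : Measure Ω}

lemma sq_integral_le_integral_sq [IsProbabilityMeasure μ] {X : Ω → ℝ} (hX : MemLp X 2 μ) :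
    (∫ ω, X ω ∂μ) ^ 2 ≤ ∫ ω, X ω ^ 2 ∂μ := by
  have h := variance_nonneg X μ
  rw [variance_eq_sub hX] at h
  simpa only [Pi.pow_apply, sub_nonneg] using h

lemma memLp_two_sqrt {u : Ω → ℝ} (hu : Integrable u μ) (hu0 : 0 ≤ᵐ[μ] u) :
    MemLp (fun ω => √(u ω)) 2 μ :=
  (memLp_two_iff_integrable_sq hu.aemeasurable.sqrt.aestronglyMeasurable).2
    (hu.congr (hu0.mono fun _ h => (sq_sqrt h).symm))

lemma integral_sqrt_le_sqrt_integral [IsProbabilityMeasure μ] {u : Ω → ℝ}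
    (hu : Integrable u μ) (hu0 : 0 ≤ᵐ[μ] u) :
    ∫ ω, √(u ω) ∂μ ≤ √(∫ ω, u ω ∂μ) :=
  calc ∫ ω, √(u ω) ∂μ ≤ |∫ ω, √(u ω) ∂μ| := le_abs_self _
    _ ≤ √(∫ ω, √(u ω) ^ 2 ∂μ) :=
      abs_le_sqrt (sq_integral_le_integral_sq (memLp_two_sqrt hu hu0))
    _ = √(∫ ω, u ω ∂μ) := by rw [integral_congr_ae (hu0.mono fun _ h => sq_sqrt h)]

lemma sq_le_integral_sq_add_smul [IsProbabilityMeasure μ] [IsProbabilityMeasure ν] {X : Ω → ℝ}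
    (hXμ : MemLp X 2 μ) (hXν : MemLp X 2 ν) {c : ℝ} (hμ : ∫ ω, X ω ∂μ = c)
    (hν : ∫ ω, X ω ∂ν = c) {a b : ℝ≥0∞} (ha : a ≠ ∞) (hb : b ≠ ∞) (hab : 1 ≤ a + b) :
    c ^ 2 ≤ ∫ ω, X ω ^ 2 ∂(a • μ + b • ν) := by
  have hab' : 1 ≤ a.toReal + b.toReal := by
    rw [← ENNReal.toReal_add ha hb, ← ENNReal.toReal_one]
    exact ENNReal.toReal_mono (ENNReal.add_ne_top.2 ⟨ha, hb⟩) hab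
  have hJμ := hμ ▸ sq_integral_le_integral_sq hXμ
  have hJν := hν ▸ sq_integral_le_integral_sq hXν
  rw [integral_add_measure (hXμ.integrable_sq.smul_measure ha)
    (hXν.integrable_sq.smul_measure hb), integral_smul_measure, integral_smul_measure,
    smul_eq_mul, smul_eq_mul]
  nlinarith [mul_le_mul_of_nonneg_left hJμ (ENNReal.toReal_nonneg (a := a)),
    mul_le_mul_of_nonneg_left hJν (ENNReal.toReal_nonneg (a := b)),
    mul_le_mul_of_nonneg_right hab' (sq_nonneg c)]

end Jensen

section Line

variable {μ ν : Measure ℝ}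

lemma integrable_cdf (ρ : Measure ℝ) [IsFiniteMeasure ρ] : Integrable (cdf μ) ρ :=
  .of_bound (cdf μ).mono.measurable.aestronglyMeasurable 1
    (ae_of_all _ fun t => by
      rw [Real.norm_eq_abs, abs_of_nonneg (cdf_nonneg μ t)]
      exact cdf_le_one μ t)

lemma abs_cdf_sub_cdf_le_one (t : ℝ) : |cdf μ t - cdf ν t| ≤ 1 := by
  rw [abs_le]
  constructor <;> linarith [cdf_nonneg μ t, cdf_le_one μ t, cdf_nonneg ν t, cdf_le_one ν t]

lemma memLp_cdf_sub_cdf (ρ : Measure ℝ) [IsFiniteMeasure ρ] :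
    MemLp (fun t => cdf μ t - cdf ν t) 2 ρ :=
  .of_bound ((cdf μ).mono.measurable.sub (cdf ν).mono.measurable).aestronglyMeasurable 1
    (ae_of_all _ abs_cdf_sub_cdf_le_one)

lemma integral_cdf_eq_measureReal_prod_le [IsProbabilityMeasure μ] [IsProbabilityMeasure ν] :
    ∫ t, cdf μ t ∂ν = (μ.prod ν).real {p : ℝ × ℝ | p.1 ≤ p.2} := by
  simp_rw [cdf_eq_real, measureReal_def]
  rw [Measure.prod_apply_symm (measurableSet_le measurable_fst measurable_snd)]
  refine integral_toReal ?_ (ae_of_all _ fun t => measure_lt_top μ _)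
  exact (Monotone.measurable fun s t hst => measure_mono (Iic_subset_Iic.2 hst)).aemeasurable

lemma measure_prod_diagonal_eq_zero [SFinite μ] [SFinite ν] [NullSingletonClass μ] :
    (μ.prod ν) {p : ℝ × ℝ | p.1 = p.2} = 0 := by
  rw [Measure.prod_apply_symm (measurableSet_eq_fun measurable_fst measurable_snd)]
  simp

lemma measureReal_prod_le_add_measureReal_prod_le_swap [IsProbabilityMeasure μ]
    [IsProbabilityMeasure ν] [NullSingletonClass μ] :
    (μ.prod ν).real {p : ℝ × ℝ | p.1 ≤ p.2} + (ν.prod μ).real {p : ℝ × ℝ | p.1 ≤ p.2} = 1 := by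
  have hswap : (ν.prod μ).real {p : ℝ × ℝ | p.1 ≤ p.2} =
      (μ.prod ν).real {p : ℝ × ℝ | p.2 ≤ p.1} := by
    rw [← Measure.prod_swap, map_measureReal_apply measurable_swap
      (measurableSet_le measurable_fst measurable_snd)]
    rfl
  have hcompl : (μ.prod ν).real {p : ℝ × ℝ | p.2 ≤ p.1} =
      (μ.prod ν).real {p : ℝ × ℝ | p.1 ≤ p.2}ᶜ := by
    refine measureReal_congr (ae_eq_set.2 ⟨?_, ?_⟩)
    · refine measure_mono_null (fun p hp => ?_) measure_prod_diagonal_eq_zero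
      simp only [mem_sdiff, mem_ofPred_eq, mem_compl_iff, not_not] at hp
      exact le_antisymm hp.2 hp.1
    · refine measure_mono_null (fun p hp => ?_) measure_empty
      simp only [mem_sdiff, mem_ofPred_eq, mem_compl_iff] at hp
      exact hp.2 (not_le.1 hp.1).le
  rw [hswap, hcompl, probReal_compl_eq_one_sub (measurableSet_le measurable_fst measurable_snd)]
  ring

lemma measureReal_prod_self_le [IsProbabilityMeasure μ] [NullSingletonClass μ] :
    (μ.prod μ).real {p : ℝ × ℝ | p.1 ≤ p.2} = 1 / 2 := by
  linarith [measureReal_prod_le_add_measureReal_prod_le_swap (μ := μ) (ν := μ)]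

lemma integral_cdf_sub_cdf_left [IsProbabilityMeasure μ] [IsProbabilityMeasure ν]
    [NullSingletonClass μ] :
    ∫ t, (cdf μ t - cdf ν t) ∂μ = (μ.prod ν).real {p : ℝ × ℝ | p.1 ≤ p.2} - 1 / 2 := by
  rw [integral_sub (integrable_cdf μ) (integrable_cdf μ), integral_cdf_eq_measureReal_prod_le,
    integral_cdf_eq_measureReal_prod_le, measureReal_prod_self_le]
  linarith [measureReal_prod_le_add_measureReal_prod_le_swap (μ := μ) (ν := ν)]

lemma integral_cdf_sub_cdf_right [IsProbabilityMeasure μ] [IsProbabilityMeasure ν]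
    [NullSingletonClass ν] :
    ∫ t, (cdf μ t - cdf ν t) ∂ν = (μ.prod ν).real {p : ℝ × ℝ | p.1 ≤ p.2} - 1 / 2 := by
  rw [integral_sub (integrable_cdf ν) (integrable_cdf ν), integral_cdf_eq_measureReal_prod_le,
    integral_cdf_eq_measureReal_prod_le, measureReal_prod_self_le]

lemma abs_half_sub_measureReal_prod_le_le_sqrt [IsProbabilityMeasure μ] [IsProbabilityMeasure ν]
    [NullSingletonClass μ] [NullSingletonClass ν] {a b : ℝ≥0∞} (ha : a ≠ ∞) (hb : b ≠ ∞)
    (hab : 1 ≤ a + b) :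
    |1 / 2 - (μ.prod ν).real {p : ℝ × ℝ | p.1 ≤ p.2}| ≤
      √(∫ t, (cdf μ t - cdf ν t) ^ 2 ∂(a • μ + b • ν)) := by
  rw [abs_sub_comm]
  exact abs_le_sqrt (sq_le_integral_sq_add_smul (memLp_cdf_sub_cdf μ) (memLp_cdf_sub_cdf ν)
    integral_cdf_sub_cdf_left integral_cdf_sub_cdf_right ha hb hab)

end Line

section Projection

variable {d : ℕ} (P Q : Measure (EuclideanSpace ℝ (Fin d))) (β : EuclideanSpace ℝ (Fin d))

lemma measurable_const_inner : Measurable fun x : EuclideanSpace ℝ (Fin d) => ⟪β, x⟫ :=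
  measurable_id.const_inner

instance isProbabilityMeasure_sphereUniform : IsProbabilityMeasure (sphereUniform d) := by
  have : IsProbabilityMeasure (stdGaussian d) :=
    Measure.isProbabilityMeasure_map (EuclideanSpace.equiv (Fin d) ℝ).symm.continuous.aemeasurable
  exact Measure.isProbabilityMeasure_map (measurable_norm.inv.smul measurable_id).aemeasurable

instance isProbabilityMeasure_projLaw [IsProbabilityMeasure P] :
    IsProbabilityMeasure (projLaw P β) :=
  Measure.isProbabilityMeasure_map (measurable_const_inner β).aemeasurable

lemma projCDF_eq_cdf [IsProbabilityMeasure P] : projCDF P β = cdf (projLaw P β) := by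
  ext t
  rw [cdf_eq_real, projLaw,
    map_measureReal_apply (measurable_const_inner β) measurableSet_Iic]
  rfl

lemma projLaw_add_smul (a b : ℝ≥0∞) :
    projLaw (a • P + b • Q) β = a • projLaw P β + b • projLaw Q β := by
  rw [projLaw, Measure.map_add _ _ (measurable_const_inner β), Measure.map_smul,
    Measure.map_smul, projLaw, projLaw]

lemma measure_prod_inner_le_eq [SFinite P] [SFinite Q] :
    (P.prod Q) {z | ⟪β, z.1⟫ ≤ ⟪β, z.2⟫} =
      ((projLaw P β).prod (projLaw Q β)) {p | p.1 ≤ p.2} := by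
  rw [projLaw, projLaw, Measure.map_prod_map _ _ (measurable_const_inner β)
    (measurable_const_inner β), Measure.map_apply ((measurable_const_inner β).prodMap
    (measurable_const_inner β)) (measurableSet_le measurable_fst measurable_snd)]
  rfl

/-- The integrand of `cvmSq` in the direction `β`: `cvmSq ϑ P Q` is definitionally
`∫ β, cvmSqAt P Q β ϑ ∂(sphereUniform d)`. -/
def cvmSqAt (ϑ : ℝ) : ℝ :=
  ∫ t, (projCDF P β t - projCDF Q β t) ^ 2
    ∂(projLaw (ENNReal.ofReal ϑ • P + ENNReal.ofReal (1 - ϑ) • Q) β)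

lemma abs_half_sub_measure_prod_inner_le_le_sqrt_cvmSqAt [IsProbabilityMeasure P]
    [IsProbabilityMeasure Q] {β : EuclideanSpace ℝ (Fin d)} (hP : ∀ t, projLaw P β {t} = 0)
    (hQ : ∀ t, projLaw Q β {t} = 0) (ϑ : ℝ) :
    |1 / 2 - ((P.prod Q) {z | ⟪β, z.1⟫ ≤ ⟪β, z.2⟫}).toReal| ≤ √(cvmSqAt P Q β ϑ) := by
  have : NullSingletonClass (projLaw P β) := ⟨hP⟩
  have : NullSingletonClass (projLaw Q β) := ⟨hQ⟩
  have hweights : 1 ≤ ENNReal.ofReal ϑ + ENNReal.ofReal (1 - ϑ) := by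
    simpa using ENNReal.ofReal_add_le (p := ϑ) (q := 1 - ϑ)
  rw [cvmSqAt, projLaw_add_smul, projCDF_eq_cdf, projCDF_eq_cdf, measure_prod_inner_le_eq]
  exact abs_half_sub_measureReal_prod_le_le_sqrt ENNReal.ofReal_ne_top ENNReal.ofReal_ne_top
    hweights

lemma cvmSqAt_nonneg (ϑ : ℝ) : 0 ≤ cvmSqAt P Q β ϑ :=
  integral_nonneg fun _ => sq_nonneg _

instance isFiniteMeasure_projLaw [IsFiniteMeasure P] : IsFiniteMeasure (projLaw P β) :=
  Measure.isFiniteMeasure_map P _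

variable [IsProbabilityMeasure P] [IsProbabilityMeasure Q]

instance isFiniteMeasure_ofReal_smul_add_ofReal_smul (ϑ : ℝ) :
    IsFiniteMeasure (ENNReal.ofReal ϑ • P + ENNReal.ofReal (1 - ϑ) • Q) :=
  have := P.smul_finite (ENNReal.ofReal_ne_top (r := ϑ))
  have := Q.smul_finite (ENNReal.ofReal_ne_top (r := 1 - ϑ))
  inferInstance

lemma cvmSqAt_eq_integral (ϑ : ℝ) :
    cvmSqAt P Q β ϑ = ∫ x, (projCDF P β ⟪β, x⟫ - projCDF Q β ⟪β, x⟫) ^ 2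
      ∂(ENNReal.ofReal ϑ • P + ENNReal.ofReal (1 - ϑ) • Q) := by
  rw [cvmSqAt, projLaw, integral_map (measurable_const_inner β).aemeasurable]
  rw [projCDF_eq_cdf, projCDF_eq_cdf]
  exact (((cdf _).mono.measurable.sub (cdf _).mono.measurable).pow_const 2).aestronglyMeasurable

lemma measurable_projCDF_inner :
    Measurable fun q : EuclideanSpace ℝ (Fin d) × EuclideanSpace ℝ (Fin d) =>
      projCDF P q.1 ⟪q.1, q.2⟫ := by
  have hS : MeasurableSet {r : (EuclideanSpace ℝ (Fin d) × EuclideanSpace ℝ (Fin d)) ×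
      EuclideanSpace ℝ (Fin d) | ⟪r.1.1, r.2⟫ ≤ ⟪r.1.1, r.1.2⟫} :=
    measurableSet_le (continuous_fst.fst.inner continuous_snd).measurable
      (continuous_fst.fst.inner continuous_fst.snd).measurable
  exact (measurable_measure_prodMk_left hS).ennreal_toReal

lemma measurable_cvmSqAt (ϑ : ℝ) : Measurable fun β => cvmSqAt P Q β ϑ := by
  simp_rw [cvmSqAt_eq_integral]
  exact (StronglyMeasurable.integral_prod_right' (((measurable_projCDF_inner P).sub
    (measurable_projCDF_inner Q)).pow_const 2).stronglyMeasurable).measurable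

lemma integrable_cvmSqAt (ϑ : ℝ) :
    Integrable (fun β => cvmSqAt P Q β ϑ) (sphereUniform d) := by
  set R := ENNReal.ofReal ϑ • P + ENNReal.ofReal (1 - ϑ) • Q
  refine .of_bound (measurable_cvmSqAt P Q ϑ).aestronglyMeasurable (1 * R.real univ)
    (ae_of_all _ fun β => ?_)
  rw [← preimage_univ (f := fun x => ⟪β, x⟫), ← map_measureReal_apply
    (measurable_const_inner β) MeasurableSet.univ]
  refine norm_integral_le_of_norm_le_const (ae_of_all _ fun t => ?_)
  rw [projCDF_eq_cdf, projCDF_eq_cdf, norm_pow, Real.norm_eq_abs]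
  exact pow_le_one₀ (abs_nonneg _) (abs_cdf_sub_cdf_le_one t)

end Projection

theorem stmt5_general {d : ℕ} (P Q : Measure (EuclideanSpace ℝ (Fin d)))
    [IsProbabilityMeasure P] [IsProbabilityMeasure Q]
    (hc : ContinuityAssumption P Q) (ϑ : ℝ) :
    (∫ β, |1 / 2 - ((P.prod Q) {z | ⟪β, z.1⟫ ≤ ⟪β, z.2⟫}).toReal| ∂(sphereUniform d))
      ≤ Real.sqrt (cvmSq ϑ P Q) := by
  have hint := integrable_cvmSqAt P Q ϑ
  have hnonneg : 0 ≤ᵐ[sphereUniform d] fun β => cvmSqAt P Q β ϑ :=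
    ae_of_all _ fun β => cvmSqAt_nonneg P Q β ϑ
  calc _ ≤ ∫ β, √(cvmSqAt P Q β ϑ) ∂(sphereUniform d) :=
        integral_mono_of_nonneg (ae_of_all _ fun _ => abs_nonneg _)
          ((memLp_two_sqrt hint hnonneg).integrable one_le_two)
          (hc.mono fun _ hβ =>
            abs_half_sub_measure_prod_inner_le_le_sqrt_cvmSqAt P Q hβ.1 hβ.2 ϑ)
    _ ≤ √(cvmSq ϑ P Q) := integral_sqrt_le_sqrt_integral hint hnonneg

/-- Lower bound for the CvM distance, Lemma 4.1: under the continuity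
assumption, `W_d(P,Q) ≥ ∫_{S^{d-1}} |1/2 - (P⊗Q){(x,y) : ⟪β,x⟫ ≤ ⟪β,y⟫}| dλ(β)`. -/
theorem stmt5 {d : ℕ} (P Q : Measure (EuclideanSpace ℝ (Fin d)))
    [IsProbabilityMeasure P] [IsProbabilityMeasure Q]
    (hc : ContinuityAssumption P Q) (ϑ : ℝ) (hϑ : ϑ ∈ Set.Ioo (0 : ℝ) 1) :
    (∫ β, |1 / 2 - ((P.prod Q) {z | ⟪β, z.1⟫ ≤ ⟪β, z.2⟫}).toReal| ∂(sphereUniform d))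
      ≤ Real.sqrt (cvmSq ϑ P Q) :=
  stmt5_general P Q hc ϑ
end
end

section
/- Fix c > 0. For integers m, n ≥ 2 and d ≥ 1, let P* be the law on ℝ^d of the random vector (ξ, 0, …, 0) where ξ is Gaussian with mean c·m^{−1/2} and variance 1, and let Q* be the law of (ξ', 0, …, 0) where ξ' is Gaussian with mean −c·n^{−1/2} and variance 1. Then for every weight ϑ ∈ (0,1): (i) there exists a constant C > 0 depending only on c (and not on d, m, n, or ϑ) such that W_d(P*, Q*) ≥ C·(m^{−1/2} + n^{−1/2}); and (ii) W_d(P*, Q*) ≤ (c/√2)·(m^{−1/2} + n^{−1/2}). -/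
open MeasureTheory ProbabilityTheory Real
open scoped RealInnerProductSpace ENNReal BigOperators

noncomputable section

/-- The law on `ℝ^d` of the vector `(ξ, 0, …, 0)` where `ξ ~ N(μ₀, 1)`. -/
def lineGaussian (d : ℕ) (hd : 0 < d) (μ0 : ℝ) : Measure (EuclideanSpace ℝ (Fin d)) :=
  (gaussianReal μ0 1).map fun t => EuclideanSpace.single (⟨0, hd⟩ : Fin d) t

/-!
For every direction `β` with `β₀ ≠ 0` (that is, `λ`-almost every `β`) the projections of `P*`
and `Q*` are `N(μ, 1)` and `N(ν, 1)` with `μ = c/√m`, `ν = -c/√n`, pushed forward by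
`s ↦ β₀ s`. This map is monotone or antitone; in the second case each CDF `F` turns into
`1 - F`, so the squared difference is unchanged and the inner integral is
`∫ (Φ(s - μ) - Φ(s - ν))² dH(s)` for the Gaussian mixture `H`, independently of `β` and `d`.
The CDF gap is the `N(0, 1)`-mass of `(s - μ, s - ν]`: at most `(μ - ν)/√(2π)` everywhere, and
at least `(μ - ν) φ(1 + c)` for `|s| ≤ 1`, where `H` puts mass at least `2 φ(1 + c)`
(`Φ`, `φ` the standard normal CDF and density).
-/

open Set
open scoped NNReal

lemma gaussianPDFReal_le_inv_sqrt (μ : ℝ) (v : ℝ≥0) (x : ℝ) :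
    gaussianPDFReal μ v x ≤ (√(2 * π * v))⁻¹ := by
  rw [gaussianPDFReal]
  refine mul_le_of_le_one_right (by positivity) (Real.exp_le_one_iff.mpr ?_)
  exact div_nonpos_of_nonpos_of_nonneg (neg_nonpos.mpr (sq_nonneg _)) (by positivity)

section Gaussian

variable {μ ν : ℝ} {v : ℝ≥0}

lemma gaussianPDFReal_zero_le_of_abs_sub_le {x M : ℝ} (h : |x - μ| ≤ M) :
    gaussianPDFReal 0 v M ≤ gaussianPDFReal μ v x := by
  have hsq : (x - μ) ^ 2 ≤ (M - 0) ^ 2 := by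
    rw [sub_zero]; exact sq_le_sq' (abs_le.mp h).1 (abs_le.mp h).2
  rw [gaussianPDFReal, gaussianPDFReal]
  gcongr

lemma gaussianReal_real_eq_integral (hv : v ≠ 0) (s : Set ℝ) :
    (gaussianReal μ v).real s = ∫ x in s, gaussianPDFReal μ v x := by
  rw [measureReal_def, gaussianReal_apply_eq_integral μ hv, ENNReal.toReal_ofReal
    (setIntegral_nonneg_of_ae (ae_of_all _ (gaussianPDFReal_nonneg μ v)))]

lemma gaussianReal_real_Ioc_le (hv : v ≠ 0) {a b : ℝ} (hab : a ≤ b) :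
    (gaussianReal μ v).real (Ioc a b) ≤ (b - a) * (√(2 * π * v))⁻¹ := by
  rw [gaussianReal_real_eq_integral hv]
  calc ∫ x in Ioc a b, gaussianPDFReal μ v x ≤ ∫ _ in Ioc a b, (√(2 * π * v))⁻¹ :=
        setIntegral_mono_on (integrable_gaussianPDFReal μ v).integrableOn
          (integrableOn_const (by simp)) measurableSet_Ioc
          fun x _ ↦ gaussianPDFReal_le_inv_sqrt μ v x
    _ = (b - a) * (√(2 * π * v))⁻¹ := by simp [hab]

lemma le_gaussianReal_real_Ioc (hv : v ≠ 0) {a b M : ℝ} (hab : a ≤ b)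
    (hM : ∀ x ∈ Ioc a b, |x - μ| ≤ M) :
    (b - a) * gaussianPDFReal 0 v M ≤ (gaussianReal μ v).real (Ioc a b) := by
  rw [gaussianReal_real_eq_integral hv]
  calc (b - a) * gaussianPDFReal 0 v M = ∫ _ in Ioc a b, gaussianPDFReal 0 v M := by simp [hab]
    _ ≤ ∫ x in Ioc a b, gaussianPDFReal μ v x :=
        setIntegral_mono_on (integrableOn_const (by simp))
          (integrable_gaussianPDFReal μ v).integrableOn measurableSet_Ioc
          fun x hx ↦ gaussianPDFReal_zero_le_of_abs_sub_le (hM x hx)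

lemma le_gaussianReal_real_Icc (hv : v ≠ 0) {a r : ℝ} (hr : 0 ≤ r) (hμ : |μ| ≤ a) :
    2 * r * gaussianPDFReal 0 v (r + a) ≤ (gaussianReal μ v).real (Icc (-r) r) := by
  have hM : ∀ x ∈ Ioc (-r) r, |x - μ| ≤ r + a := fun x hx ↦ by
    rw [abs_le] at hμ ⊢; constructor <;> linarith [hx.1, hx.2]
  calc 2 * r * gaussianPDFReal 0 v (r + a) = (r - -r) * gaussianPDFReal 0 v (r + a) := by ring
    _ ≤ (gaussianReal μ v).real (Ioc (-r) r) := le_gaussianReal_real_Ioc hv (by linarith) hM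
    _ ≤ (gaussianReal μ v).real (Icc (-r) r) := measureReal_mono Ioc_subset_Icc_self

lemma cdf_gaussianReal (s : ℝ) : cdf (gaussianReal μ v) s = cdf (gaussianReal 0 v) (s - μ) := by
  rw [cdf_eq_real, cdf_eq_real, ← zero_add μ, ← gaussianReal_map_add_const,
    map_measureReal_apply (measurable_add_const μ) measurableSet_Iic, preimage_add_const_Iic,
    zero_add]

lemma sq_cdf_gaussianReal_sub (hνμ : ν ≤ μ) (s : ℝ) :
    (cdf (gaussianReal μ v) s - cdf (gaussianReal ν v) s) ^ 2
      = (gaussianReal 0 v).real (Ioc (s - μ) (s - ν)) ^ 2 := by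
  rw [← Iic_sdiff_Iic, measureReal_sdiff (Iic_subset_Iic.mpr (by linarith)) measurableSet_Iic,
    cdf_gaussianReal (μ := μ), cdf_gaussianReal (μ := ν), cdf_eq_real, cdf_eq_real, ← neg_sub,
    neg_sq]

end Gaussian

section Mixture

variable {ϑ : ℝ} {p q : Measure ℝ}

lemma isProbabilityMeasure_mixture (hϑ₀ : 0 ≤ ϑ) (hϑ₁ : ϑ ≤ 1)
    [IsProbabilityMeasure p] [IsProbabilityMeasure q] :
    IsProbabilityMeasure (ENNReal.ofReal ϑ • p + ENNReal.ofReal (1 - ϑ) • q) := by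
  constructor
  simp only [Measure.add_apply, Measure.smul_apply, smul_eq_mul, measure_univ, mul_one]
  rw [← ENNReal.ofReal_add hϑ₀ (by linarith), add_sub_cancel, ENNReal.ofReal_one]

lemma le_mixture_real (hϑ₀ : 0 ≤ ϑ) (hϑ₁ : ϑ ≤ 1) [IsFiniteMeasure p] [IsFiniteMeasure q]
    {s : Set ℝ} {a : ℝ} (hp : a ≤ p.real s) (hq : a ≤ q.real s) :
    a ≤ (ENNReal.ofReal ϑ • p + ENNReal.ofReal (1 - ϑ) • q).real s := by
  simp only [measureReal_def, Measure.add_apply, Measure.smul_apply, smul_eq_mul] at hp hq ⊢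
  rw [ENNReal.toReal_add (by finiteness) (by finiteness), ENNReal.toReal_mul, ENNReal.toReal_mul,
    ENNReal.toReal_ofReal hϑ₀, ENNReal.toReal_ofReal (by linarith)]
  nlinarith

end Mixture

lemma integrable_sq_cdf_sub (p q ρ : Measure ℝ) [IsFiniteMeasure ρ] :
    Integrable (fun s ↦ (cdf p s - cdf q s) ^ 2) ρ := by
  have hmeas := ((monotone_cdf p).measurable.sub (monotone_cdf q).measurable).pow_const 2
  refine Integrable.of_bound hmeas.aestronglyMeasurable 1 (ae_of_all _ fun s ↦ ?_)
  have := cdf_nonneg p s; have := cdf_le_one p s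
  have := cdf_nonneg q s; have := cdf_le_one q s
  rw [Real.norm_of_nonneg (sq_nonneg _)]
  nlinarith

section GaussianCvM

variable {μ ν : ℝ} {v : ℝ≥0} (ρ : Measure ℝ)

lemma integral_sq_cdf_gaussianReal_sub_le [IsProbabilityMeasure ρ] (hv : v ≠ 0) (hνμ : ν ≤ μ) :
    ∫ s, (cdf (gaussianReal μ v) s - cdf (gaussianReal ν v) s) ^ 2 ∂ρ
      ≤ ((μ - ν) * (√(2 * π * v))⁻¹) ^ 2 := by
  have hbound : ∀ s, (cdf (gaussianReal μ v) s - cdf (gaussianReal ν v) s) ^ 2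
      ≤ ((μ - ν) * (√(2 * π * v))⁻¹) ^ 2 := fun s ↦ by
    rw [sq_cdf_gaussianReal_sub hνμ]
    refine pow_le_pow_left₀ measureReal_nonneg ?_ 2
    simpa using gaussianReal_real_Ioc_le (μ := 0) hv (a := s - μ) (b := s - ν) (by linarith)
  calc _ ≤ ∫ _, ((μ - ν) * (√(2 * π * v))⁻¹) ^ 2 ∂ρ :=
        integral_mono (integrable_sq_cdf_sub _ _ ρ) (integrable_const _) hbound
    _ = _ := by simp

lemma le_integral_sq_cdf_gaussianReal_sub [IsFiniteMeasure ρ] (hv : v ≠ 0) (hνμ : ν ≤ μ)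
    {a r : ℝ} (hμ : |μ| ≤ a) (hν : |ν| ≤ a) :
    ((μ - ν) * gaussianPDFReal 0 v (r + a)) ^ 2 * ρ.real (Icc (-r) r)
      ≤ ∫ s, (cdf (gaussianReal μ v) s - cdf (gaussianReal ν v) s) ^ 2 ∂ρ := by
  have hbound : ∀ s ∈ Icc (-r) r, ((μ - ν) * gaussianPDFReal 0 v (r + a)) ^ 2
      ≤ (cdf (gaussianReal μ v) s - cdf (gaussianReal ν v) s) ^ 2 := fun s hs ↦ by
    have hM : ∀ x ∈ Ioc (s - μ) (s - ν), |x - 0| ≤ r + a := fun x hx ↦ by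
      rw [abs_le] at hμ hν ⊢; constructor <;> linarith [hx.1, hx.2, hs.1, hs.2]
    rw [sq_cdf_gaussianReal_sub hνμ]
    refine pow_le_pow_left₀ (mul_nonneg (by linarith) (gaussianPDFReal_nonneg _ _ _)) ?_ 2
    simpa using le_gaussianReal_real_Ioc hv (by linarith) hM
  calc _ ≤ ∫ s in Icc (-r) r, (cdf (gaussianReal μ v) s - cdf (gaussianReal ν v) s) ^ 2 ∂ρ := by
        simpa [mul_comm] using setIntegral_ge_of_const_le measurableSet_Icc (by finiteness) hbound
          (integrable_sq_cdf_sub _ _ ρ).integrableOn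
    _ ≤ _ := setIntegral_le_integral (integrable_sq_cdf_sub _ _ ρ) (ae_of_all _ fun _ ↦ sq_nonneg _)

end GaussianCvM

section CoordinateLine

variable {d : ℕ} (e : Fin d) (r : Measure ℝ) (β : EuclideanSpace ℝ (Fin d))

lemma measurable_euclideanSpace_single :
    Measurable (EuclideanSpace.single e : ℝ → EuclideanSpace ℝ (Fin d)) :=
  ((PiLp.continuous_toLp 2 _).comp (continuous_single (A := fun _ : Fin d ↦ ℝ) e)).measurable

lemma projLaw_map_single : projLaw (r.map (EuclideanSpace.single e)) β = r.map (β e * ·) := by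
  rw [projLaw, Measure.map_map (by fun_prop) (measurable_euclideanSpace_single e)]
  congr 1
  ext s
  simp [EuclideanSpace.inner_single_right, mul_comm]

lemma projCDF_map_single (t : ℝ) :
    projCDF (r.map (EuclideanSpace.single e)) β t = r.real {s | β e * s ≤ t} := by
  rw [projCDF, ← measureReal_def, map_measureReal_apply (measurable_euclideanSpace_single e)
    (measurableSet_le (by fun_prop) measurable_const)]
  congr 1
  ext s
  simp [EuclideanSpace.inner_single_right, mul_comm]

lemma projCDF_map_single_mul_of_pos [IsProbabilityMeasure r] (hβ : 0 < β e) (s : ℝ) :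
    projCDF (r.map (EuclideanSpace.single e)) β (β e * s) = cdf r s := by
  simp_rw [projCDF_map_single, mul_le_mul_iff_of_pos_left hβ, cdf_eq_real]
  rfl

lemma projCDF_map_single_mul_of_neg [IsProbabilityMeasure r] [NullSingletonClass r]
    (hβ : β e < 0) (s : ℝ) :
    projCDF (r.map (EuclideanSpace.single e)) β (β e * s) = 1 - cdf r s := by
  simp_rw [projCDF_map_single, mul_le_mul_left_of_neg hβ, cdf_eq_real]
  rw [← measureReal_congr (Iio_ae_eq_Iic (μ := r)), ← probReal_compl_eq_one_sub measurableSet_Iio,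
    compl_Iio]
  rfl

lemma sq_projCDF_sub_map_single_mul (p q : Measure ℝ) [IsProbabilityMeasure p]
    [IsProbabilityMeasure q] [NullSingletonClass p] [NullSingletonClass q] (hβ : β e ≠ 0)
    (s : ℝ) :
    (projCDF (p.map (EuclideanSpace.single e)) β (β e * s)
        - projCDF (q.map (EuclideanSpace.single e)) β (β e * s)) ^ 2 = (cdf p s - cdf q s) ^ 2 := by
  rcases hβ.lt_or_gt with hneg | hpos
  · rw [projCDF_map_single_mul_of_neg e p β hneg, projCDF_map_single_mul_of_neg e q β hneg]
    ring
  · rw [projCDF_map_single_mul_of_pos e p β hpos, projCDF_map_single_mul_of_pos e q β hpos]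

lemma integral_sq_projCDF_sub_map_single (p q : Measure ℝ) [IsProbabilityMeasure p]
    [IsProbabilityMeasure q] [NullSingletonClass p] [NullSingletonClass q] (a b : ℝ≥0∞)
    (hβ : β e ≠ 0) :
    ∫ t, (projCDF (p.map (EuclideanSpace.single e)) β t
        - projCDF (q.map (EuclideanSpace.single e)) β t) ^ 2
        ∂projLaw (a • p.map (EuclideanSpace.single e) + b • q.map (EuclideanSpace.single e)) β
      = ∫ s, (cdf p s - cdf q s) ^ 2 ∂(a • p + b • q) := by
  rw [← Measure.map_smul, ← Measure.map_smul,
    ← Measure.map_add _ _ (measurable_euclideanSpace_single e), projLaw_map_single,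
    (measurableEmbedding_mulLeft₀ hβ).integral_map]
  simp_rw [sq_projCDF_sub_map_single_mul e β p q hβ]

end CoordinateLine

section Sphere

variable {d : ℕ}

lemma measurable_normalize :
    Measurable fun x : EuclideanSpace ℝ (Fin d) ↦ ‖x‖⁻¹ • x :=
  measurable_norm.inv.smul measurable_id

instance : IsProbabilityMeasure (stdGaussian d) :=
  Measure.isProbabilityMeasure_map (by fun_prop)

instance : IsProbabilityMeasure (sphereUniform d) :=
  Measure.isProbabilityMeasure_map measurable_normalize.aemeasurable

lemma ae_stdGaussian_apply_ne_zero (e : Fin d) : ∀ᵐ x ∂stdGaussian d, x e ≠ 0 := by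
  have := nullSingletonClass_gaussianReal (μ := 0) one_ne_zero
  rw [_root_.stdGaussian]
  exact (ae_map_iff (by fun_prop) (measurableSet_eq_fun (by fun_prop) measurable_const).compl).mpr
    (Measure.ae_eval_ne _ e 0)

lemma ae_sphereUniform_apply_ne_zero (e : Fin d) : ∀ᵐ β ∂sphereUniform d, β e ≠ 0 := by
  refine (ae_map_iff measurable_normalize.aemeasurable
    (measurableSet_eq_fun (by fun_prop) measurable_const).compl).mpr ?_
  filter_upwards [ae_stdGaussian_apply_ne_zero e] with x hx
  have hx0 : x ≠ 0 := fun h ↦ hx (by simp [h])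
  simpa [hx0] using hx

end Sphere

lemma cvmSq_map_single {d : ℕ} (e : Fin d) (ϑ : ℝ) (p q : Measure ℝ) [IsProbabilityMeasure p]
    [IsProbabilityMeasure q] [NullSingletonClass p] [NullSingletonClass q] :
    cvmSq ϑ (p.map (EuclideanSpace.single e)) (q.map (EuclideanSpace.single e))
      = ∫ s, (cdf p s - cdf q s) ^ 2 ∂(ENNReal.ofReal ϑ • p + ENNReal.ofReal (1 - ϑ) • q) := by
  rw [cvmSq, integral_congr_ae ((ae_sphereUniform_apply_ne_zero e).mono fun β hβ ↦
    integral_sq_projCDF_sub_map_single e β p q _ _ hβ)]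
  simp

lemma cvmSq_lineGaussian {d : ℕ} (hd : 0 < d) (ϑ μ ν : ℝ) :
    cvmSq ϑ (lineGaussian d hd μ) (lineGaussian d hd ν)
      = ∫ s, (cdf (gaussianReal μ 1) s - cdf (gaussianReal ν 1) s) ^ 2
          ∂(ENNReal.ofReal ϑ • gaussianReal μ 1 + ENNReal.ofReal (1 - ϑ) • gaussianReal ν 1) :=
  have := nullSingletonClass_gaussianReal (μ := μ) one_ne_zero
  have := nullSingletonClass_gaussianReal (μ := ν) one_ne_zero
  cvmSq_map_single _ ϑ _ _

lemma abs_div_sqrt_natCast_le {c : ℝ} (hc : 0 ≤ c) {k : ℕ} (hk : 1 ≤ k) : |c / √k| ≤ c := by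
  rw [abs_of_nonneg (by positivity)]
  exact div_le_self hc (Real.one_le_sqrt.mpr (by exact_mod_cast hk))

/-- Lemma 4.2: with `P* = law of (ξ,0,…,0)`, `ξ ~ N(c m^{-1/2},1)` and
`Q* = law of (ξ',0,…,0)`, `ξ' ~ N(-c n^{-1/2},1)`, for every `ϑ ∈ (0,1)` one has
`W_d(P*,Q*) ≥ C (m^{-1/2} + n^{-1/2})` for a constant `C > 0` depending only on `c`,
and `W_d(P*,Q*) ≤ (c/√2)(m^{-1/2} + n^{-1/2})`. -/
theorem stmt6 (c : ℝ) (hc : 0 < c) :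
    ∃ C : ℝ, 0 < C ∧
      ∀ (d m n : ℕ) (hd : 0 < d), 2 ≤ m → 2 ≤ n → ∀ ϑ : ℝ, ϑ ∈ Set.Ioo (0 : ℝ) 1 →
        C * (1 / Real.sqrt m + 1 / Real.sqrt n)
            ≤ Real.sqrt (cvmSq ϑ (lineGaussian d hd (c / Real.sqrt m))
                (lineGaussian d hd (-(c / Real.sqrt n)))) ∧
          Real.sqrt (cvmSq ϑ (lineGaussian d hd (c / Real.sqrt m))
                (lineGaussian d hd (-(c / Real.sqrt n))))
            ≤ (c / Real.sqrt 2) * (1 / Real.sqrt m + 1 / Real.sqrt n) := by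
  set K := gaussianPDFReal 0 1 (1 + c)
  have hK : 0 < K := gaussianPDFReal_pos _ _ _ one_ne_zero
  refine ⟨c * K * √(2 * K), by positivity, fun d m n hd hm hn ϑ hϑ ↦ ?_⟩
  set S := 1 / √m + 1 / √n
  set μ := c / √m
  set ν := -(c / √n)
  have hμ : |μ| ≤ c := abs_div_sqrt_natCast_le hc.le (by omega)
  have hν : |ν| ≤ c := by rw [abs_neg]; exact abs_div_sqrt_natCast_le hc.le (by omega)
  have hνμ : ν ≤ μ := (neg_nonpos.mpr (by positivity)).trans (by positivity)
  have hgap : μ - ν = c * S := by ring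
  set ρ := ENNReal.ofReal ϑ • gaussianReal μ 1 + ENNReal.ofReal (1 - ϑ) • gaussianReal ν 1
  have := isProbabilityMeasure_mixture (p := gaussianReal μ 1) (q := gaussianReal ν 1)
    hϑ.1.le hϑ.2.le
  have hmass : 2 * 1 * K ≤ ρ.real (Icc (-1) 1) :=
    le_mixture_real hϑ.1.le hϑ.2.le (le_gaussianReal_real_Icc one_ne_zero zero_le_one hμ)
      (le_gaussianReal_real_Icc one_ne_zero zero_le_one hν)
  rw [cvmSq_lineGaussian]
  constructor
  · rw [Real.le_sqrt (by positivity) (integral_nonneg fun _ ↦ sq_nonneg _)]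
    calc (c * K * √(2 * K) * S) ^ 2 = ((μ - ν) * K) ^ 2 * (2 * 1 * K) := by
          rw [hgap, mul_pow, mul_pow, Real.sq_sqrt (by positivity)]; ring
      _ ≤ ((μ - ν) * K) ^ 2 * ρ.real (Icc (-1) 1) := by gcongr
      _ ≤ _ := le_integral_sq_cdf_gaussianReal_sub ρ one_ne_zero hνμ hμ hν
  · rw [Real.sqrt_le_left (by positivity)]
    calc _ ≤ ((μ - ν) * (√(2 * π * (1 : ℝ≥0)))⁻¹) ^ 2 :=
          integral_sq_cdf_gaussianReal_sub_le ρ one_ne_zero hνμ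
      _ ≤ (c / √2 * S) ^ 2 := by
          rw [hgap, div_eq_mul_inv, mul_right_comm]
          gcongr
          simp only [NNReal.coe_one, mul_one]
          nlinarith [Real.pi_gt_three]
end
end

section
/- Let d ≥ 1, m, n ≥ 3, N = m + n, and let z_1, …, z_N ∈ ℝ^d be arbitrary points. For a permutation π of {1, …, N}, define U*(π) = (1/((m)_3 (n)_3)) Σ Σ h*_CvM(z_{π(i1)}, z_{π(i2)}, z_{π(i3)}; z_{π(m+j1)}, z_{π(m+j2)}, z_{π(m+j3)}), where the first sum is over triples of pairwise distinct indices i1, i2, i3 ∈ {1,…,m}, the second over triples of pairwise distinct indices j1, j2, j3 ∈ {1,…,n}, and (k)_3 = k(k−1)(k−2). Then: (i) (1/N!) Σ_{π ∈ S_N} U*(π) = 0; and (ii) there exists a universal constant C > 0, independent of d, m, n and of the points, such that (1/N!) Σ_{π ∈ S_N} U*(π)² ≤ C·(1/m + 1/n)². -/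
open MeasureTheory ProbabilityTheory Real
open scoped RealInnerProductSpace ENNReal BigOperators

noncomputable section

/-- The third-order Cramér–von Mises kernel `h*_CvM`. -/
def hStarCvM {d : ℕ} (x1 x2 x3 y1 y2 y3 : EuclideanSpace ℝ (Fin d)) : ℝ :=
  (1 / 2) * (∫ β,
      (((if ⟪β, x1⟫ ≤ ⟪β, x3⟫ then (1 : ℝ) else 0) - (if ⟪β, y1⟫ ≤ ⟪β, x3⟫ then (1 : ℝ) else 0))
        * ((if ⟪β, x2⟫ ≤ ⟪β, x3⟫ then (1 : ℝ) else 0) - (if ⟪β, y2⟫ ≤ ⟪β, x3⟫ then (1 : ℝ) else 0)))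
      ∂(sphereUniform d))
  + (1 / 2) * (∫ β,
      (((if ⟪β, x1⟫ ≤ ⟪β, y3⟫ then (1 : ℝ) else 0) - (if ⟪β, y1⟫ ≤ ⟪β, y3⟫ then (1 : ℝ) else 0))
        * ((if ⟪β, x2⟫ ≤ ⟪β, y3⟫ then (1 : ℝ) else 0) - (if ⟪β, y2⟫ ≤ ⟪β, y3⟫ then (1 : ℝ) else 0)))
      ∂(sphereUniform d))

/-- The permuted `U`-statistic: given pooled points `z₁,…,z_{m+n}` and a permutation `π`,
`U*(π) = ((m)₃(n)₃)⁻¹ Σ_{i₁,i₂,i₃ distinct} Σ_{j₁,j₂,j₃ distinct}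
  h*_CvM(z_{π(i₁)}, z_{π(i₂)}, z_{π(i₃)}; z_{π(m+j₁)}, z_{π(m+j₂)}, z_{π(m+j₃)})`. -/
def UStarPerm {d : ℕ} (m n : ℕ) (z : Fin (m + n) → EuclideanSpace ℝ (Fin d))
    (π' : Equiv.Perm (Fin (m + n))) : ℝ :=
  ((m : ℝ) * ((m : ℝ) - 1) * ((m : ℝ) - 2) * ((n : ℝ) * ((n : ℝ) - 1) * ((n : ℝ) - 2)))⁻¹ *
    ∑ i1 : Fin m, ∑ i2 : Fin m, ∑ i3 : Fin m, ∑ j1 : Fin n, ∑ j2 : Fin n, ∑ j3 : Fin n,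
      if i1 ≠ i2 ∧ i1 ≠ i3 ∧ i2 ≠ i3 ∧ j1 ≠ j2 ∧ j1 ≠ j3 ∧ j2 ≠ j3 then
        hStarCvM (z (π' (Fin.castAdd n i1))) (z (π' (Fin.castAdd n i2)))
          (z (π' (Fin.castAdd n i3)))
          (z (π' (Fin.natAdd m j1))) (z (π' (Fin.natAdd m j2))) (z (π' (Fin.natAdd m j3)))
      else 0

/-!
Every summand of `U*(π)` is the kernel `h*_CvM` evaluated at six pooled points. The kernel
changes sign when `x₁` and `y₁` (or `x₂` and `y₂`) are exchanged, so composing `π` with the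
transposition of the corresponding two positions negates the summand. Averaging over `S_N`
therefore kills every summand, and in the second moment it kills the product of the summands
indexed by `A` and `B` unless `B` meets both pairs of positions `{i₁, m + j₁}` and
`{i₂, m + j₂}` of `A`. For each of the `m³ n³` tuples `A` only `O(m n (m + n)²)` tuples `B` do
so, and `|h*_CvM| ≤ 1`; dividing by `((m)₃ (n)₃)²` leaves `O((1/m + 1/n)²)`.
-/

theorem Fintype.sum_eq_zero_of_mul_right_eq_neg {G : Type*} [Group G] [Fintype G]
    (F : G → ℝ) (σ : G) (hF : ∀ g, F (g * σ) = -F g) : ∑ g, F g = 0 := by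
  have h := Fintype.sum_equiv (Equiv.mulRight σ) (fun g => F (g * σ)) F (fun _ => rfl)
  simp only [hF, Finset.sum_neg_distrib] at h
  linarith

open Finset in
theorem sum_sq_sum_le_of_orthogonal {G T : Type*} [Fintype G] [Fintype T]
    (f : G → T → ℝ) {M : ℝ} (hf : ∀ g A, |f g A| ≤ M)
    (R : T → T → Prop) [DecidableRel R]
    (horth : ∀ A B, ¬R A B → ∑ g, f g A * f g B = 0) :
    ∑ g, (∑ A, f g A) ^ 2 ≤ Fintype.card G * M ^ 2 * ∑ A, (#{B | R A B} : ℝ) := by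
  have hpair : ∀ A B, ∑ g, f g A * f g B ≤ if R A B then Fintype.card G * M ^ 2 else 0 := by
    intro A B
    split_ifs with hR
    · calc ∑ g, f g A * f g B ≤ ∑ _g : G, M ^ 2 := sum_le_sum fun g _ =>
            (le_abs_self _).trans <| by
              rw [abs_mul, sq]
              exact mul_le_mul (hf g A) (hf g B) (abs_nonneg _) ((abs_nonneg _).trans (hf g A))
        _ = Fintype.card G * M ^ 2 := by simp
    · exact (horth A B hR).le
  calc ∑ g, (∑ A, f g A) ^ 2 = ∑ A, ∑ B, ∑ g, f g A * f g B := by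
        simp only [sq, sum_mul_sum]
        rw [sum_comm]
        exact sum_congr rfl fun A _ => sum_comm
    _ ≤ ∑ A, ∑ B, if R A B then (Fintype.card G * M ^ 2 : ℝ) else 0 :=
        sum_le_sum fun A _ => sum_le_sum fun B _ => hpair A B
    _ = Fintype.card G * M ^ 2 * ∑ A, (#{B | R A B} : ℝ) := by
        simp [sum_ite, mul_sum, mul_comm]

def MemTriple {α : Type*} (a : α) (x : α × α × α) : Prop := x.1 = a ∨ x.2.1 = a ∨ x.2.2 = a

instance {α : Type*} [DecidableEq α] (a : α) : DecidablePred (MemTriple a) :=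
  fun _ => inferInstanceAs (Decidable (_ ∨ _ ∨ _))

section MemTriple

variable {α : Type*} [Fintype α] [DecidableEq α]

open Finset

theorem card_filter_memTriple_le (a : α) :
    #{x : α × α × α | MemTriple a x} ≤ 3 * Fintype.card α ^ 2 := by
  let f : Fin 3 → α × α → α × α × α :=
    ![fun p => (a, p.1, p.2), fun p => (p.1, a, p.2), fun p => (p.1, p.2, a)]
  have hsub : ({x | MemTriple a x} : Finset (α × α × α)) ⊆
      univ.biUnion fun k => univ.image (f k) := by
    rintro ⟨x1, x2, x3⟩ hx
    simp only [MemTriple] at hx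
    simp only [f, mem_biUnion, mem_univ, mem_image, true_and, Fin.exists_fin_succ,
      IsEmpty.exists_iff, or_false, Prod.exists, Prod.mk.injEq, Matrix.cons_val_zero,
      Matrix.cons_val_succ]
    grind
  refine (card_le_card hsub).trans <|
    (card_biUnion_le_card_mul _ _ _ fun _ _ => card_image_le).trans_eq ?_
  simp [sq]

theorem card_filter_memTriple_and_le {a b : α} (hab : a ≠ b) :
    #{x : α × α × α | MemTriple a x ∧ MemTriple b x} ≤ 6 * Fintype.card α := by
  let f : Fin 6 → α → α × α × α :=
    ![fun v => (a, b, v), fun v => (b, a, v), fun v => (a, v, b), fun v => (b, v, a),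
      fun v => (v, a, b), fun v => (v, b, a)]
  have hsub : ({x | MemTriple a x ∧ MemTriple b x} : Finset (α × α × α)) ⊆
      univ.biUnion fun k => univ.image (f k) := by
    rintro ⟨x1, x2, x3⟩ hx
    simp only [MemTriple] at hx
    simp only [f, mem_biUnion, mem_univ, mem_image, true_and, Fin.exists_fin_succ,
      IsEmpty.exists_iff, or_false, Prod.mk.injEq, Matrix.cons_val_zero,
      Matrix.cons_val_succ]
    grind
  refine (card_le_card hsub).trans <|
    (card_biUnion_le_card_mul _ _ _ fun _ _ => card_image_le).trans_eq ?_
  simp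

end MemTriple

theorem Fin.castAdd_ne_natAdd {m n : ℕ} (i : Fin m) (j : Fin n) :
    Fin.castAdd n i ≠ Fin.natAdd m j := by
  simp only [ne_eq, Fin.ext_iff, Fin.val_castAdd, Fin.val_natAdd]
  omega

section Swap

variable {m n : ℕ}

open Equiv Fin

theorem swap_castAdd_natAdd_apply_castAdd {i i' : Fin m} (j : Fin n) (h : i' ≠ i) :
    swap (castAdd n i) (natAdd m j) (castAdd n i') = castAdd n i' :=
  swap_apply_of_ne_of_ne (by simpa) (castAdd_ne_natAdd _ _)

theorem swap_castAdd_natAdd_apply_natAdd (i : Fin m) {j j' : Fin n} (h : j' ≠ j) :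
    swap (castAdd n i) (natAdd m j) (natAdd m j') = natAdd m j' :=
  swap_apply_of_ne_of_ne (castAdd_ne_natAdd _ _).symm (by simpa)

end Swap

instance (d : ℕ) : IsProbabilityMeasure (stdGaussian d) :=
  Measure.isProbabilityMeasure_map (EuclideanSpace.equiv (Fin d) ℝ).symm.continuous.aemeasurable

instance (d : ℕ) : IsProbabilityMeasure (sphereUniform d) :=
  Measure.isProbabilityMeasure_map (measurable_norm.inv.smul measurable_id).aemeasurable

section Kernel

variable {d : ℕ} (x1 x2 x3 y1 y2 y3 : EuclideanSpace ℝ (Fin d))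

theorem hStarCvM_swap₁ : hStarCvM y1 x2 x3 x1 y2 y3 = -hStarCvM x1 x2 x3 y1 y2 y3 := by
  simp only [hStarCvM, neg_add, ← mul_neg, ← integral_neg]
  congr 2 <;> (congr 1; ext β; ring)

theorem hStarCvM_comm : hStarCvM x2 x1 x3 y2 y1 y3 = hStarCvM x1 x2 x3 y1 y2 y3 := by
  simp only [hStarCvM]
  congr 2 <;> (congr 1; ext β; ring)

theorem hStarCvM_swap₂ : hStarCvM x1 y2 x3 y1 x2 y3 = -hStarCvM x1 x2 x3 y1 y2 y3 := by
  rw [← hStarCvM_comm, hStarCvM_swap₁, hStarCvM_comm]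

theorem abs_hStarCvM_le_one : |hStarCvM x1 x2 x3 y1 y2 y3| ≤ 1 := by
  have hind : ∀ p q : Prop, [Decidable p] → [Decidable q] →
      |(if p then (1 : ℝ) else 0) - if q then 1 else 0| ≤ 1 := by
    intro p q _ _
    split_ifs <;> norm_num
  have hint : ∀ f : EuclideanSpace ℝ (Fin d) → ℝ, (∀ β, |f β| ≤ 1) →
      |∫ β, f β ∂(sphereUniform d)| ≤ 1 := fun f hf => by
    simpa using norm_integral_le_of_norm_le_const (μ := sphereUniform d) (C := 1) (f := f)
      (ae_of_all _ hf)
  have h1 := hint _ fun β => (abs_mul _ _).trans_le <|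
    mul_le_one₀ (hind (⟪β, x1⟫ ≤ ⟪β, x3⟫) (⟪β, y1⟫ ≤ ⟪β, x3⟫)) (abs_nonneg _)
      (hind (⟪β, x2⟫ ≤ ⟪β, x3⟫) (⟪β, y2⟫ ≤ ⟪β, x3⟫))
  have h2 := hint _ fun β => (abs_mul _ _).trans_le <|
    mul_le_one₀ (hind (⟪β, x1⟫ ≤ ⟪β, y3⟫) (⟪β, y1⟫ ≤ ⟪β, y3⟫)) (abs_nonneg _)
      (hind (⟪β, x2⟫ ≤ ⟪β, y3⟫) (⟪β, y2⟫ ≤ ⟪β, y3⟫))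
  rw [hStarCvM]
  refine (abs_add_le _ _).trans ?_
  rw [abs_mul, abs_mul, abs_of_pos one_half_pos]
  linarith

end Kernel

abbrev IndexTuple (m n : ℕ) := (Fin m × Fin m × Fin m) × (Fin n × Fin n × Fin n)

section IndexTuple

variable {d m n : ℕ}

open Equiv Fin

def cvmTerm (w : Fin (m + n) → EuclideanSpace ℝ (Fin d)) : IndexTuple m n → ℝ
  | ((i1, i2, i3), (j1, j2, j3)) =>
    if i1 ≠ i2 ∧ i1 ≠ i3 ∧ i2 ≠ i3 ∧ j1 ≠ j2 ∧ j1 ≠ j3 ∧ j2 ≠ j3 then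
      hStarCvM (w (castAdd n i1)) (w (castAdd n i2)) (w (castAdd n i3))
        (w (natAdd m j1)) (w (natAdd m j2)) (w (natAdd m j3))
    else 0

theorem UStarPerm_eq_sum_cvmTerm (z : Fin (m + n) → EuclideanSpace ℝ (Fin d))
    (τ : Perm (Fin (m + n))) :
    UStarPerm m n z τ =
      ((m : ℝ) * ((m : ℝ) - 1) * ((m : ℝ) - 2) * ((n : ℝ) * ((n : ℝ) - 1) * ((n : ℝ) - 2)))⁻¹ *
        ∑ A : IndexTuple m n, cvmTerm (z ∘ τ) A := by
  simp only [UStarPerm, Fintype.sum_prod_type]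
  rfl

theorem abs_cvmTerm_le_one (w : Fin (m + n) → EuclideanSpace ℝ (Fin d)) (A : IndexTuple m n) :
    |cvmTerm w A| ≤ 1 := by
  obtain ⟨⟨i1, i2, i3⟩, ⟨j1, j2, j3⟩⟩ := A
  simp only [cvmTerm]
  split_ifs
  · exact abs_hStarCvM_le_one ..
  · simp

theorem cvmTerm_comp_swap₁ (w : Fin (m + n) → EuclideanSpace ℝ (Fin d)) (A : IndexTuple m n) :
    cvmTerm (w ∘ swap (castAdd n A.1.1) (natAdd m A.2.1)) A = -cvmTerm w A := by
  obtain ⟨⟨i1, i2, i3⟩, ⟨j1, j2, j3⟩⟩ := A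
  simp only [cvmTerm]
  split_ifs with h
  · obtain ⟨h12, h13, -, h12', h13', -⟩ := h
    simp only [Function.comp, swap_apply_left, swap_apply_right,
      swap_castAdd_natAdd_apply_castAdd _ h12.symm, swap_castAdd_natAdd_apply_castAdd _ h13.symm,
      swap_castAdd_natAdd_apply_natAdd _ h12'.symm, swap_castAdd_natAdd_apply_natAdd _ h13'.symm]
    exact hStarCvM_swap₁ ..
  · simp

theorem cvmTerm_comp_swap₂ (w : Fin (m + n) → EuclideanSpace ℝ (Fin d)) (A : IndexTuple m n) :
    cvmTerm (w ∘ swap (castAdd n A.1.2.1) (natAdd m A.2.2.1)) A = -cvmTerm w A := by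
  obtain ⟨⟨i1, i2, i3⟩, ⟨j1, j2, j3⟩⟩ := A
  simp only [cvmTerm]
  split_ifs with h
  · obtain ⟨h12, -, h23, h12', -, h23'⟩ := h
    simp only [Function.comp, swap_apply_left, swap_apply_right,
      swap_castAdd_natAdd_apply_castAdd _ h12, swap_castAdd_natAdd_apply_castAdd _ h23.symm,
      swap_castAdd_natAdd_apply_natAdd _ h12', swap_castAdd_natAdd_apply_natAdd _ h23'.symm]
    exact hStarCvM_swap₂ ..
  · simp

def Touches (i : Fin m) (j : Fin n) (B : IndexTuple m n) : Prop :=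
  MemTriple i B.1 ∨ MemTriple j B.2

theorem cvmTerm_comp_swap_of_not_touches (w : Fin (m + n) → EuclideanSpace ℝ (Fin d))
    {i : Fin m} {j : Fin n} {B : IndexTuple m n} (h : ¬Touches i j B) :
    cvmTerm (w ∘ swap (castAdd n i) (natAdd m j)) B = cvmTerm w B := by
  obtain ⟨⟨i1, i2, i3⟩, ⟨j1, j2, j3⟩⟩ := B
  simp only [Touches, MemTriple, not_or] at h
  obtain ⟨⟨h1, h2, h3⟩, h1', h2', h3'⟩ := h
  simp only [cvmTerm, Function.comp,
    swap_castAdd_natAdd_apply_castAdd _ h1, swap_castAdd_natAdd_apply_castAdd _ h2,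
    swap_castAdd_natAdd_apply_castAdd _ h3, swap_castAdd_natAdd_apply_natAdd _ h1',
    swap_castAdd_natAdd_apply_natAdd _ h2', swap_castAdd_natAdd_apply_natAdd _ h3']

end IndexTuple

section Moments

variable {d m n : ℕ}

open Equiv Fin Finset

def Interacts (A B : IndexTuple m n) : Prop :=
  A.1.1 ≠ A.1.2.1 ∧ A.2.1 ≠ A.2.2.1 ∧ Touches A.1.1 A.2.1 B ∧ Touches A.1.2.1 A.2.2.1 B

instance : DecidableRel (Interacts (m := m) (n := n)) := fun _ _ =>
  inferInstanceAs (Decidable (_ ∧ _ ∧ (_ ∨ _) ∧ (_ ∨ _)))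

theorem sum_perm_cvmTerm_eq_zero (z : Fin (m + n) → EuclideanSpace ℝ (Fin d))
    (A : IndexTuple m n) : ∑ τ : Perm (Fin (m + n)), cvmTerm (z ∘ τ) A = 0 :=
  Fintype.sum_eq_zero_of_mul_right_eq_neg _ (swap (castAdd n A.1.1) (natAdd m A.2.1)) fun τ => by
    rw [Perm.coe_mul, ← Function.comp_assoc, cvmTerm_comp_swap₁]

theorem sum_perm_cvmTerm_mul_eq_zero (z : Fin (m + n) → EuclideanSpace ℝ (Fin d))
    {A B : IndexTuple m n} (h : ¬Interacts A B) :
    ∑ τ : Perm (Fin (m + n)), cvmTerm (z ∘ τ) A * cvmTerm (z ∘ τ) B = 0 := by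
  have of_flip : ∀ σ : Perm (Fin (m + n)),
      (∀ w : Fin (m + n) → EuclideanSpace ℝ (Fin d), cvmTerm (w ∘ σ) A = -cvmTerm w A) →
      (∀ w : Fin (m + n) → EuclideanSpace ℝ (Fin d), cvmTerm (w ∘ σ) B = cvmTerm w B) →
      ∑ τ : Perm (Fin (m + n)), cvmTerm (z ∘ τ) A * cvmTerm (z ∘ τ) B = 0 := fun σ hA hB =>
    Fintype.sum_eq_zero_of_mul_right_eq_neg _ σ fun τ => by
      simp only [Perm.coe_mul, ← Function.comp_assoc, hA, hB, neg_mul]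
  obtain ⟨⟨i1, i2, i3⟩, ⟨j1, j2, j3⟩⟩ := A
  simp only [Interacts, not_and_or, not_not] at h
  rcases h with h | h | h | h
  · simp [cvmTerm, h]
  · simp [cvmTerm, h]
  · exact of_flip _ (cvmTerm_comp_swap₁ · _) (cvmTerm_comp_swap_of_not_touches · h)
  · exact of_flip _ (cvmTerm_comp_swap₂ · _) (cvmTerm_comp_swap_of_not_touches · h)

theorem card_interacts_le (A : IndexTuple m n) :
    #{B | Interacts A B} ≤ 6 * m * n ^ 3 + 18 * m ^ 2 * n ^ 2 + 6 * m ^ 3 * n := by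
  obtain ⟨⟨i1, i2, i3⟩, ⟨j1, j2, j3⟩⟩ := A
  by_cases hA : i1 ≠ i2 ∧ j1 ≠ j2
  swap
  · have hempty : ∀ B, ¬Interacts ((i1, i2, i3), (j1, j2, j3)) B := fun _ hB => hA ⟨hB.1, hB.2.1⟩
    simp [hempty]
  have hsub : ({B | Interacts ((i1, i2, i3), (j1, j2, j3)) B} : Finset (IndexTuple m n)) ⊆
      univ.filter (fun x => MemTriple i1 x ∧ MemTriple i2 x) ×ˢ univ
        ∪ univ.filter (MemTriple i1) ×ˢ univ.filter (MemTriple j2)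
        ∪ univ.filter (MemTriple i2) ×ˢ univ.filter (MemTriple j1)
        ∪ univ ×ˢ univ.filter (fun y => MemTriple j1 y ∧ MemTriple j2 y) := by
    rintro ⟨x, y⟩ hB
    rw [mem_filter_univ] at hB
    simp only [Interacts, Touches] at hB
    simp only [mem_union, mem_product, mem_filter_univ, mem_univ, and_true, true_and]
    tauto
  refine (card_le_card hsub).trans ?_
  grw [card_union_le, card_union_le, card_union_le]
  simp only [card_product, card_univ, Fintype.card_prod, Fintype.card_fin]
  calc _ ≤ 6 * m * (n * (n * n)) + 3 * m ^ 2 * (3 * n ^ 2) + 3 * m ^ 2 * (3 * n ^ 2)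
          + m * (m * m) * (6 * n) := by
        gcongr
        · simpa using card_filter_memTriple_and_le hA.1
        · simpa using card_filter_memTriple_le i1
        · simpa using card_filter_memTriple_le j2
        · simpa using card_filter_memTriple_le i2
        · simpa using card_filter_memTriple_le j1
        · simpa using card_filter_memTriple_and_le hA.2
    _ = _ := by ring

theorem sum_perm_sq_sum_cvmTerm_le (z : Fin (m + n) → EuclideanSpace ℝ (Fin d)) :
    ∑ τ : Perm (Fin (m + n)), (∑ A, cvmTerm (z ∘ τ) A) ^ 2
      ≤ Fintype.card (Perm (Fin (m + n)))
          * (m ^ 3 * n ^ 3 * (6 * m * n ^ 3 + 18 * m ^ 2 * n ^ 2 + 6 * m ^ 3 * n)) := by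
  have hcount : ∑ A : IndexTuple m n, (#{B | Interacts A B} : ℝ)
      ≤ m ^ 3 * n ^ 3 * (6 * m * n ^ 3 + 18 * m ^ 2 * n ^ 2 + 6 * m ^ 3 * n) := by
    calc _ ≤ ∑ _A : IndexTuple m n, (6 * m * n ^ 3 + 18 * m ^ 2 * n ^ 2 + 6 * m ^ 3 * n : ℝ) :=
          sum_le_sum fun A _ => by exact_mod_cast card_interacts_le A
      _ = _ := by
          simp only [Finset.sum_const, card_univ, Fintype.card_prod, Fintype.card_fin, nsmul_eq_mul]
          push_cast
          ring
  refine (sum_sq_sum_le_of_orthogonal (fun (τ : Perm (Fin (m + n))) A => cvmTerm (z ∘ τ) A)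
    (fun _ _ => abs_cvmTerm_le_one _ _) Interacts
    (fun _ _ h => sum_perm_cvmTerm_mul_eq_zero z h)).trans ?_
  rw [one_pow, mul_one]
  gcongr

end Moments

theorem two_ninths_mul_cube_le {x : ℝ} (hx : 3 ≤ x) : 2 / 9 * x ^ 3 ≤ x * (x - 1) * (x - 2) := by
  nlinarith [mul_nonneg (by linarith : (0 : ℝ) ≤ x) (mul_nonneg (by linarith : (0 : ℝ) ≤ x - 3)
    (by linarith : (0 : ℝ) ≤ 7 * x - 6))]

theorem inv_sq_fallingCubes_mul_le {m n : ℝ} (hm : 3 ≤ m) (hn : 3 ≤ n) :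
    ((m * (m - 1) * (m - 2) * (n * (n - 1) * (n - 2)))⁻¹) ^ 2
        * (m ^ 3 * n ^ 3 * (6 * m * n ^ 3 + 18 * m ^ 2 * n ^ 2 + 6 * m ^ 3 * n))
      ≤ 4000 * (1 / m + 1 / n) ^ 2 := by
  have hfall : 4 / 81 * (m ^ 3 * n ^ 3) ≤ m * (m - 1) * (m - 2) * (n * (n - 1) * (n - 2)) := by
    calc 4 / 81 * (m ^ 3 * n ^ 3) = (2 / 9 * m ^ 3) * (2 / 9 * n ^ 3) := by ring
      _ ≤ _ := mul_le_mul (two_ninths_mul_cube_le hm) (two_ninths_mul_cube_le hn)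
          (by positivity) ((by positivity : (0 : ℝ) ≤ 2 / 9 * m ^ 3).trans
            (two_ninths_mul_cube_le hm))
  have hm0 : 0 < m := by linarith
  have hn0 : 0 < n := by linarith
  rw [inv_pow, inv_mul_le_iff₀ (pow_pos ((by positivity : (0 : ℝ) < _).trans_le hfall) 2)]
  have hsq : 0 ≤ m ^ 4 * n ^ 4 * (3 * m ^ 2 + 3 * n ^ 2) := by positivity
  have hpos : 0 ≤ m ^ 4 * n ^ 4 * (m + n) ^ 2 := by positivity
  calc m ^ 3 * n ^ 3 * (6 * m * n ^ 3 + 18 * m ^ 2 * n ^ 2 + 6 * m ^ 3 * n)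
      ≤ 9 * (m ^ 4 * n ^ 4 * (m + n) ^ 2) := by linarith
    _ ≤ 64000 / 6561 * (m ^ 4 * n ^ 4 * (m + n) ^ 2) := by linarith
    _ = (4 / 81 * (m ^ 3 * n ^ 3)) ^ 2 * (4000 * (1 / m + 1 / n) ^ 2) := by
        field_simp
        ring
    _ ≤ _ := by gcongr

/-- Moments under permutations, Lemma for Theorem 3.1: for arbitrary points
`z₁,…,z_N ∈ ℝ^d` (`N = m+n`, `m,n ≥ 3`, `d ≥ 1`), the permutation average of `U*(π)` vanishes,
and there is a universal constant `C > 0` (independent of `d`, `m`, `n` and the points) with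
`(1/N!) Σ_π U*(π)² ≤ C (1/m + 1/n)²`. -/
theorem stmt9 :
    ∃ C : ℝ, 0 < C ∧
      ∀ (d m n : ℕ), 1 ≤ d → 3 ≤ m → 3 ≤ n →
        ∀ z : Fin (m + n) → EuclideanSpace ℝ (Fin d),
          ((Nat.factorial (m + n) : ℝ))⁻¹
              * ∑ π' : Equiv.Perm (Fin (m + n)), UStarPerm m n z π' = 0 ∧
          ((Nat.factorial (m + n) : ℝ))⁻¹
              * ∑ π' : Equiv.Perm (Fin (m + n)), (UStarPerm m n z π') ^ 2
            ≤ C * (1 / m + 1 / n) ^ 2 := by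
  refine ⟨4000, by norm_num, fun d m n _ hm hn z => ?_⟩
  have hfact : ((m + n).factorial : ℝ) = Fintype.card (Equiv.Perm (Fin (m + n))) := by
    simp [Fintype.card_perm]
  simp only [UStarPerm_eq_sum_cvmTerm, hfact, mul_pow, ← Finset.mul_sum]
  refine ⟨by rw [Finset.sum_comm]; simp [sum_perm_cvmTerm_eq_zero], ?_⟩
  rw [mul_left_comm]
  refine le_trans ?_ (inv_sq_fallingCubes_mul_le (by exact_mod_cast hm) (by exact_mod_cast hn))
  refine mul_le_mul_of_nonneg_left ?_ (sq_nonneg _)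
  rw [inv_mul_le_iff₀ (by positivity)]
  exact sum_perm_sq_sum_cvmTerm_le z
end
end
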